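/- Let G be a connected unicyclic graph with unique cycle C on vertices v_1,…,v_m, and let z_0 be a leaf of the highest level of G with level(z_0) = 1, whose unique neighbor is v_1, with N(v_1) = {z_0, z_1, …, z_s} ∪ {v_2, v_m}. If G is not 3-proximal and G_{z_0,1} is 3-proximal, then ν_3(G_{z_0,1}) < ν_3(G). -/

import Mathlib

noncomputable section

namespace PathIdeals

open MvPolynomial

variable {k : Type*} [Field k] {V : Type*} [Fintype V] [LinearOrder V]

/-- Transport a graded piece along an equality of degrees. -/
def castLinear (k : Type*) [Field k] (N : ℕ → Type*) [∀ a, AddCommGroup (N a)]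
    [∀ a, Module k (N a)] {a b : ℕ} (h : a = b) : N a →ₗ[k] N b := by
  subst h; exact LinearMap.id

/-- The Koszul-type differential computing `Tor^S(k, N)` for a graded module `N` over
`S = k[x_v : v ∈ V]` given by its graded pieces `N a` together with the multiplication maps
`x_v ⬝ : N a → N (a+1)`.  The map goes from homological degree `i`, internal degree `j`
(so coefficients in `N (j - i)`) to homological degree `i - 1`. -/
def koszulMap (k : Type*) [Field k] {V : Type*} [Fintype V] [LinearOrder V]
    (N : ℕ → Type*) [∀ a, AddCommGroup (N a)] [∀ a, Module k (N a)]
    (mul : V → ∀ a : ℕ, N a →ₗ[k] N (a + 1)) (i j : ℕ) :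
    ({s : Finset V // s.card = i} →₀ N (j - i)) →ₗ[k]
      ({s : Finset V // s.card = i - 1} →₀ N (j - (i - 1))) :=
  if h : 1 ≤ i ∧ i ≤ j then
    Finsupp.lsum k fun s : {s : Finset V // s.card = i} =>
      ∑ v ∈ s.1.attach,
        ((-1 : k) ^ (s.1.filter (fun w => w < v.1)).card) •
          ((Finsupp.lsingle
              (⟨s.1.erase v.1, by rw [Finset.card_erase_of_mem v.2, s.2]⟩ :
                {s : Finset V // s.card = i - 1})).comp
            ((castLinear k N (by omega : (j - i) + 1 = j - (i - 1))).comp (mul v.1 (j - i))))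
  else 0

/-- The `(i,j)`-th graded Betti number `β_{i,j} = dim_k Tor_i^S(k, N)_j` of the graded module
`N`, computed as the dimension of the homology of the Koszul complex tensored with `N`.
(For modules generated in non-negative degrees, such as ideals and their quotient rings,
the Betti numbers vanish when `j < i`.) -/
def bettiAux (k : Type*) [Field k] {V : Type*} [Fintype V] [LinearOrder V]
    (N : ℕ → Type*) [∀ a, AddCommGroup (N a)] [∀ a, Module k (N a)]
    (mul : V → ∀ a : ℕ, N a →ₗ[k] N (a + 1)) (i j : ℕ) : ℕ :=
  if j < i then 0
  else
    Module.finrank k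
      (↥(LinearMap.ker (koszulMap k N mul i j)) ⧸
        Submodule.comap (LinearMap.ker (koszulMap k N mul i j)).subtype
          (LinearMap.range (koszulMap k N mul (i + 1) j)))

/-- The degree-`a` graded piece of a homogeneous ideal `I ⊆ S`, as a `k`-subspace. -/
def idealPiece (k : Type*) [Field k] {V : Type*} (I : Ideal (MvPolynomial V k)) (a : ℕ) :
    Submodule k (MvPolynomial V k) :=
  Submodule.restrictScalars k I ⊓ homogeneousSubmodule V k a

/-- Multiplication by the variable `x_v` on graded pieces of an ideal. -/
def idealMul {k : Type*} [Field k] {V : Type*} (I : Ideal (MvPolynomial V k)) (v : V) (a : ℕ) :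
    ↥(idealPiece k I a) →ₗ[k] ↥(idealPiece k I (a + 1)) where
  toFun f := ⟨X v * f.1, by
    obtain ⟨h1, h2⟩ := Submodule.mem_inf.mp f.2
    refine Submodule.mem_inf.mpr ⟨I.mul_mem_left _ h1, ?_⟩
    rw [mem_homogeneousSubmodule] at h2 ⊢
    simpa [add_comm] using (isHomogeneous_X k v).mul h2⟩
  map_add' f g := by ext; simp [mul_add]
  map_smul' c f := by ext; simp [mul_smul_comm]

/-- The `(i,j)`-th graded Betti number `β_{i,j}(I) = dim_k Tor_i^S(k, I)_j` of a homogeneous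
ideal `I` of the polynomial ring `S = k[x_v : v ∈ V]`. -/
def gradedBetti (k : Type*) [Field k] {V : Type*} [Fintype V] [LinearOrder V]
    (I : Ideal (MvPolynomial V k)) (i j : ℕ) : ℕ :=
  bettiAux k (fun a => ↥(idealPiece k I a)) (idealMul I) i j

/-- The projective dimension `pd(I) = sup { i | β_{i,j}(I) ≠ 0 for some j }` of a homogeneous
ideal of the polynomial ring. -/
def pdIdeal (k : Type*) [Field k] {V : Type*} [Fintype V] [LinearOrder V]
    (I : Ideal (MvPolynomial V k)) : ℕ :=
  sSup {i | ∃ j, gradedBetti k I i j ≠ 0}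

/-- The Castelnuovo–Mumford regularity `reg(I) = sup { j - i | β_{i,j}(I) ≠ 0 }` of a
homogeneous ideal of the polynomial ring. -/
def regIdeal (k : Type*) [Field k] {V : Type*} [Fintype V] [LinearOrder V]
    (I : Ideal (MvPolynomial V k)) : ℕ :=
  sSup {r | ∃ i, gradedBetti k I i (i + r) ≠ 0}

/-- Multiplication by `x_v` on the (constant) ungraded module underlying an ideal. -/
def idealMulTotal {k : Type*} [Field k] {V : Type*} (I : Ideal (MvPolynomial V k)) (v : V)
    (_ : ℕ) : ↥(Submodule.restrictScalars k I) →ₗ[k] ↥(Submodule.restrictScalars k I) where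
  toFun f := ⟨X v * f.1, I.mul_mem_left _ f.2⟩
  map_add' f g := by ext; simp [mul_add]
  map_smul' c f := by ext; simp [mul_smul_comm]

/-- The `i`-th total Betti number `β_i(I) = dim_k Tor_i^S(k, I)` of a homogeneous ideal of
the polynomial ring, computed as the dimension of ungraded Koszul homology. -/
def totalBetti (k : Type*) [Field k] {V : Type*} [Fintype V] [LinearOrder V]
    (I : Ideal (MvPolynomial V k)) (i : ℕ) : ℕ :=
  bettiAux k (fun _ => ↥(Submodule.restrictScalars k I)) (idealMulTotal I) i (i + 1)

/-- `P = I + J` is a Betti splitting if `β_i(P) = β_i(I) + β_i(J) + β_{i-1}(I ∩ J)`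
for all `i ≥ 0` (where `β_{-1} = 0`). -/
def IsBettiSplitting (k : Type*) [Field k] {V : Type*} [Fintype V] [LinearOrder V]
    (P I J : Ideal (MvPolynomial V k)) : Prop :=
  P = I + J ∧ totalBetti k P 0 = totalBetti k I 0 + totalBetti k J 0 ∧
    ∀ i : ℕ, totalBetti k P (i + 1) =
      totalBetti k I (i + 1) + totalBetti k J (i + 1) + totalBetti k (I ⊓ J) i

/-- The subspace of the degree-`a` homogeneous component of `S` consisting of elements of a
homogeneous ideal `I`. -/
def quotSub (k : Type*) [Field k] {V : Type*} (I : Ideal (MvPolynomial V k)) (a : ℕ) :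
    Submodule k ↥(homogeneousSubmodule V k a) :=
  Submodule.comap (homogeneousSubmodule V k a).subtype (Submodule.restrictScalars k I)

/-- The degree-`a` graded piece of the quotient ring `S/I`. -/
def quotPiece (k : Type*) [Field k] {V : Type*} (I : Ideal (MvPolynomial V k)) (a : ℕ) :
    Type _ :=
  ↥(homogeneousSubmodule V k a) ⧸ quotSub k I a

instance (I : Ideal (MvPolynomial V k)) (a : ℕ) : AddCommGroup (quotPiece k I a) :=
  inferInstanceAs (AddCommGroup (↥(homogeneousSubmodule V k a) ⧸ quotSub k I a))

instance (I : Ideal (MvPolynomial V k)) (a : ℕ) : Module k (quotPiece k I a) :=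
  inferInstanceAs (Module k (↥(homogeneousSubmodule V k a) ⧸ quotSub k I a))

/-- Multiplication by `x_v` on the homogeneous components of `S`. -/
def homogMul (k : Type*) [Field k] {V : Type*} (v : V) (a : ℕ) :
    ↥(homogeneousSubmodule V k a) →ₗ[k] ↥(homogeneousSubmodule V k (a + 1)) where
  toFun f := ⟨X v * f.1, by
    have h2 := (mem_homogeneousSubmodule _ _).mp f.2
    rw [mem_homogeneousSubmodule]
    simpa [add_comm] using (isHomogeneous_X k v).mul h2⟩
  map_add' f g := by ext; simp [mul_add]
  map_smul' c f := by ext; simp [mul_smul_comm]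

/-- Multiplication by `x_v` on graded pieces of the quotient ring `S/I`. -/
def quotMul {k : Type*} [Field k] {V : Type*} (I : Ideal (MvPolynomial V k)) (v : V) (a : ℕ) :
    quotPiece k I a →ₗ[k] quotPiece k I (a + 1) :=
  Submodule.mapQ (quotSub k I a) (quotSub k I (a + 1)) (homogMul k v a)
    (fun _ hx => I.mul_mem_left _ hx)

/-- The Castelnuovo–Mumford regularity `reg(S/I) = sup { j - i | β_{i,j}(S/I) ≠ 0 }` of the
quotient of the polynomial ring by a homogeneous ideal. -/
def regQuot (k : Type*) [Field k] {V : Type*} [Fintype V] [LinearOrder V]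
    (I : Ideal (MvPolynomial V k)) : ℕ :=
  sSup {r | ∃ i, bettiAux k (quotPiece k I) (quotMul I) i (i + r) ≠ 0}

/-! ### Graphs, path ideals and path induced matching numbers -/

/-- `l` is (the vertex list of) a `t`-path of `G`: `t` distinct vertices with consecutive
vertices adjacent. -/
def IsPathList {V : Type*} (G : SimpleGraph V) (t : ℕ) (l : List V) : Prop :=
  l.length = t ∧ l.Nodup ∧ l.Chain' G.Adj

/-- The `t`-path ideal `I_t(G)` of the graph `G`, generated by the monomials
`x_{u_1} ⋯ x_{u_t}` over all `t`-paths `u_1, …, u_t` of `G`. -/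
def pathIdeal (k : Type*) [Field k] {V : Type*} (G : SimpleGraph V) (t : ℕ) :
    Ideal (MvPolynomial V k) :=
  Ideal.span {f | ∃ l : List V, IsPathList G t l ∧ f = (l.map X).prod}

/-- A family of `t`-paths indexed by `Fin n` is a `t`-path induced matching of `G` if the
paths are pairwise vertex-disjoint and the only edges of `G` between vertices of the paths
are the edges of the paths. -/
def IsPathInducedMatching {V : Type*} (G : SimpleGraph V) (t : ℕ) {n : ℕ}
    (P : Fin n → List V) : Prop :=
  (∀ a, IsPathList G t (P a)) ∧
    (∀ a b, a ≠ b → ∀ x, x ∈ P a → x ∉ P b) ∧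
    (∀ x y : V, (∃ a, x ∈ P a) → (∃ b, y ∈ P b) → G.Adj x y →
      ∃ a, [x, y] <:+: P a ∨ [y, x] <:+: P a)

/-- The `t`-path induced matching number `ν_t(G)`: the largest size of a `t`-path induced
matching of `G`. -/
def pathNu {V : Type*} (G : SimpleGraph V) (t : ℕ) : ℕ :=
  sSup {n | ∃ P : Fin n → List V, IsPathInducedMatching G t P}

/-- The induced subgraph of `G` on a set `A` of vertices, viewed as a graph on the same
vertex set (all vertices outside `A` become isolated). -/
def inducedOn {V : Type*} (G : SimpleGraph V) (A : Set V) : SimpleGraph V where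
  Adj x y := G.Adj x y ∧ x ∈ A ∧ y ∈ A
  symm := ⟨fun _ _ ⟨h, hx, hy⟩ => ⟨h.symm, hy, hx⟩⟩
  loopless := ⟨fun _ ⟨h, _, _⟩ => h.ne rfl⟩

/-- The set of neighbors of a set of vertices. -/
def nbhd {V : Type*} (G : SimpleGraph V) (A : Set V) : Set V :=
  {y | ∃ x ∈ A, G.Adj x y}

/-- The closed neighborhood `N[A] = A ∪ N(A)` of a set of vertices. -/
def closedNbhd {V : Type*} (G : SimpleGraph V) (A : Set V) : Set V :=
  A ∪ nbhd G A

/-- A leaf of a graph is a vertex with a unique neighbor. -/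
def IsLeaf {V : Type*} (G : SimpleGraph V) (x : V) : Prop :=
  ∃! y, G.Adj x y

/-- The level of a vertex `y`: its distance to the set of distinguished vertices
(the cycle vertices, resp. the root in the tree case). -/
def levelTo {V : Type*} (G : SimpleGraph V) {m : ℕ} (v : Fin m → V) (y : V) : ℕ :=
  sInf {d | ∃ i, G.dist (v i) y = d}

/-- `v` lists the vertices of a cycle of `G` (in cyclic order). -/
def IsCycleOn {V : Type*} (G : SimpleGraph V) {m : ℕ} [NeZero m] (v : Fin m → V) : Prop :=
  Function.Injective v ∧ ∀ i : Fin m, G.Adj (v i) (v (i + 1))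

/-- Every cycle of `G` has its vertices among `v 0, …, v (m-1)`; together with `IsCycleOn`
this says that the cycle on `v` is the unique cycle of `G`. -/
def UniqueCycle {V : Type*} (G : SimpleGraph V) {m : ℕ} (v : Fin m → V) : Prop :=
  ∀ (x : V) (c : G.Walk x x), c.IsCycle → ∀ y ∈ c.support, y ∈ Set.range v

/-- `G` has at most one cycle: either `G` is a tree (and `m = 1`, `v 0` being a chosen root),
or `G` has the unique cycle `v 0, …, v (m-1)` of length `m ≥ 3`. -/
def AtMostOneCycle {V : Type*} (G : SimpleGraph V) {m : ℕ} [NeZero m] (v : Fin m → V) : Prop :=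
  (m = 1 ∧ G.IsAcyclic) ∨ (3 ≤ m ∧ IsCycleOn G v ∧ UniqueCycle G v)

/-- The graph `Γ_G(C)`: the induced subgraph of `G` obtained by deleting the boundary
`∂(C) = N(C) \ C` of the cycle with vertex set `Cset`. -/
def Gamma {V : Type*} (G : SimpleGraph V) (Cset : Set V) : SimpleGraph V :=
  inducedOn G (nbhd G Cset \ Cset)ᶜ

/-- A graph (containing the cycle with vertex set `Cset`) is `3`-proximal if
`ν_3(G) = ν_3(Γ_G(C))`. -/
def IsProximal3 {V : Type*} (G : SimpleGraph V) (Cset : Set V) : Prop :=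
  pathNu G 3 = pathNu (Gamma G Cset) 3

/-! The leaves `z_a` hang off the cycle, so they lie in `∂(C)` and deleting them leaves `Γ(C)`
unchanged. Deleting vertices cannot increase `ν_3`, and if it left `ν_3` unchanged, then
`ν_3(G) = ν_3(G_{z_0,1}) = ν_3(Γ(C))` would make `G` 3-proximal. -/

section

lemma _root_.Fin.add_one_ne_sub_one {m : ℕ} [NeZero m] (hm : 3 ≤ m) (i : Fin m) :
    i + 1 ≠ i - 1 := by
  intro h
  rw [sub_eq_add_neg] at h
  have h2 : ((1 : Fin m) + 1).val = 0 := by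
    rw [eq_neg_iff_add_eq_zero.mp (add_left_cancel h), Fin.val_zero]
  rw [Fin.val_add, Fin.val_one', Nat.mod_eq_of_lt (by omega : 1 < m),
    Nat.mod_eq_of_lt (by omega : 2 < m)] at h2
  omega

variable {V : Type*} {G : SimpleGraph V}

lemma inducedOn_inducedOn (A B : Set V) :
    inducedOn (inducedOn G A) B = inducedOn G (A ∩ B) := by
  ext x y
  simp only [inducedOn, Set.mem_inter_iff]
  tauto

lemma mem_of_isChain_inducedOn {A : Set V} :
    ∀ {l : List V}, l.IsChain (inducedOn G A).Adj → 2 ≤ l.length → ∀ x ∈ l, x ∈ A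
  | a :: b :: t, hl, _, x, hx => by
    rw [List.isChain_cons_cons] at hl
    obtain ⟨⟨-, ha, hb⟩, htail⟩ := hl
    rcases List.mem_cons.mp hx with rfl | hx
    · exact ha
    rcases t with _ | ⟨c, t⟩
    · rwa [List.mem_singleton.mp hx]
    · exact mem_of_isChain_inducedOn htail (by simp) x hx

lemma IsPathList.of_inducedOn {A : Set V} {t : ℕ} {l : List V}
    (hl : IsPathList (inducedOn G A) t l) : IsPathList G t l :=
  ⟨hl.1, hl.2.1, hl.2.2.imp fun _ _ h => h.1⟩

lemma IsPathInducedMatching.of_inducedOn {A : Set V} {t n : ℕ} (ht : 2 ≤ t)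
    {P : Fin n → List V} (hP : IsPathInducedMatching (inducedOn G A) t P) :
    IsPathInducedMatching G t P := by
  obtain ⟨hpath, hdisj, hind⟩ := hP
  have hA : ∀ a, ∀ x ∈ P a, x ∈ A := fun a =>
    mem_of_isChain_inducedOn (hpath a).2.2 ((hpath a).1 ▸ ht)
  refine ⟨fun a => (hpath a).of_inducedOn, hdisj, ?_⟩
  rintro x y ⟨a, hxa⟩ ⟨b, hyb⟩ hxy
  exact hind x y ⟨a, hxa⟩ ⟨b, hyb⟩ ⟨hxy, hA a x hxa, hA b y hyb⟩

lemma IsPathInducedMatching.le_card [Fintype V] {t n : ℕ} (ht : 0 < t)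
    {P : Fin n → List V} (hP : IsPathInducedMatching G t P) : n ≤ Fintype.card V := by
  have hne : ∀ a, P a ≠ [] := fun a h => by
    have := (hP.1 a).1
    simp [h] at this
    omega
  have hinj : Function.Injective fun a => (P a).head (hne a) := by
    intro a b hab
    by_contra hne'
    have hab : (P a).head (hne a) = (P b).head (hne b) := hab
    exact hP.2.1 a b hne' _ (List.head_mem (hne a)) (hab ▸ List.head_mem (hne b))
  simpa using Fintype.card_le_of_injective _ hinj

lemma bddAbove_pathInducedMatching [Fintype V] {t : ℕ} (ht : 0 < t) :
    BddAbove {n | ∃ P : Fin n → List V, IsPathInducedMatching G t P} :=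
  ⟨Fintype.card V, fun _ ⟨_, hP⟩ => hP.le_card ht⟩

lemma pathNu_inducedOn_le [Fintype V] (A : Set V) {t : ℕ} (ht : 2 ≤ t) :
    pathNu (inducedOn G A) t ≤ pathNu G t := by
  refine csSup_le_csSup (bddAbove_pathInducedMatching (by omega)) ?_ ?_
  · exact ⟨0, Fin.elim0, fun a => a.elim0, fun a => a.elim0, fun _ _ ⟨a, _⟩ => a.elim0⟩
  · rintro n ⟨P, hP⟩
    exact ⟨P, hP.of_inducedOn ht⟩

lemma nbhd_inducedOn_compl {C Z : Set V} (hCZ : Disjoint C Z) :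
    nbhd (inducedOn G Zᶜ) C = nbhd G C \ Z := by
  ext y
  constructor
  · rintro ⟨x, hx, hxy, -, hy⟩
    exact ⟨⟨x, hx, hxy⟩, hy⟩
  · rintro ⟨⟨x, hx, hxy⟩, hy⟩
    exact ⟨x, hx, hxy, hCZ.notMem_of_mem_left hx, hy⟩

lemma Gamma_inducedOn_compl {C Z : Set V} (hZ : Z ⊆ nbhd G C \ C) :
    Gamma (inducedOn G Zᶜ) C = Gamma G C := by
  have hCZ : Disjoint C Z := Set.disjoint_left.mpr fun x hC hZx => (hZ hZx).2 hC
  rw [Gamma, Gamma, inducedOn_inducedOn, nbhd_inducedOn_compl hCZ]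
  congr 1
  ext x
  have hZx := @hZ x
  simp only [Set.mem_inter_iff, Set.mem_compl_iff, Set.mem_sdiff] at hZx ⊢
  tauto

lemma IsCycleOn.notMem_range_of_neighborSet_eq_singleton {m : ℕ} [NeZero m] (hm : 3 ≤ m)
    {v : Fin m → V} (hcyc : IsCycleOn G v) {x y : V} (hx : G.neighborSet x = {y}) :
    x ∉ Set.range v := by
  rintro ⟨i, rfl⟩
  have hsucc : v (i + 1) ∈ G.neighborSet (v i) := hcyc.2 i
  have hpred : v (i - 1) ∈ G.neighborSet (v i) := by
    simpa using (hcyc.2 (i - 1)).symm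
  rw [hx] at hsucc hpred
  exact Fin.add_one_ne_sub_one hm i (hcyc.1 (hsucc.trans hpred.symm))

end

theorem pathNu_lt_of_proximal_level_one_general
    {V : Type*} [Fintype V]
    (G : SimpleGraph V)
    (m : ℕ) [NeZero m] (hm : 3 ≤ m) (v : Fin m → V)
    (hcyc : IsCycleOn G v)
    (s : ℕ) (z : Fin (s + 1) → V)
    (hzy : ∀ a, G.neighborSet (z a) = {v 0})
    (hnp : ¬ IsProximal3 G (Set.range v))
    (hp1 : IsProximal3 (inducedOn G (Set.range z)ᶜ) (Set.range v)) :
    pathNu (inducedOn G (Set.range z)ᶜ) 3 < pathNu G 3 := by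
  have hboundary : Set.range z ⊆ nbhd G (Set.range v) \ Set.range v := by
    rintro _ ⟨a, rfl⟩
    have hadj : G.Adj (z a) (v 0) := by rw [← G.mem_neighborSet, hzy a]; rfl
    exact ⟨⟨v 0, ⟨0, rfl⟩, hadj.symm⟩,
      hcyc.notMem_range_of_neighborSet_eq_singleton hm (hzy a)⟩
  refine (pathNu_inducedOn_le _ (by norm_num)).lt_of_ne fun heq => hnp ?_
  rw [IsProximal3, ← heq, hp1, Gamma_inducedOn_compl hboundary]

/-- **Lemma (3-proximal graphs, leaf of level `1`).**
Let `G` be a connected unicyclic graph with unique cycle `C` on vertices `v_1, …, v_m`, and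
`z_0` a leaf of the highest level with `level(z_0) = 1`, whose unique neighbor is `v_1`,
with `N(v_1) = {z_0, z_1, …, z_s} ∪ {v_2, v_m}`.  If `G` is not 3-proximal and `G_{z_0,1}`
is 3-proximal, then `ν_3(G_{z_0,1}) < ν_3(G)`. -/
theorem pathNu_lt_of_proximal_level_one
    {V : Type*} [Fintype V] [LinearOrder V]
    (G : SimpleGraph V) (hconn : G.Connected)
    (m : ℕ) [NeZero m] (hm : 3 ≤ m) (v : Fin m → V)
    (hcyc : IsCycleOn G v) (huniq : UniqueCycle G v)
    (s : ℕ) (z : Fin (s + 1) → V) (hz : Function.Injective z)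
    (hzy : ∀ a, G.neighborSet (z a) = {v 0})
    (hnv : G.neighborSet (v 0) = Set.range z ∪ {v 1, v (-1)})
    (hlevel : levelTo G v (z 0) = 1)
    (hhigh : ∀ w, IsLeaf G w → levelTo G v w ≤ levelTo G v (z 0))
    (hnp : ¬ IsProximal3 G (Set.range v))
    (hp1 : IsProximal3 (inducedOn G (Set.range z)ᶜ) (Set.range v)) :
    pathNu (inducedOn G (Set.range z)ᶜ) 3 < pathNu G 3 :=
  pathNu_lt_of_proximal_level_one_general G m hm v hcyc s z hzy hnp hp1

end PathIdeals
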